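/- (Correctness of the query algorithm, distinct components) Let v1, v2 be vertices with P v1 = i, P v2 = j, and i ≠ j. Then dist_G(v1,v2) equals the infimum over b1 ∈ B(C_i) and b2 ∈ B(C_j) of dist_{C_i}(v1,b1) + dist_BG(b1,b2) + dist_{C_j}(b2,v2). -/

import Mathlib

open scoped ENNReal

namespace SPQ

variable {V : Type*} {ι : Type*}

/-- The length of a walk: the sum of the weights `w` over its consecutive edges. -/
noncomputable def wlen (w : V → V → ℝ≥0∞) {G : SimpleGraph V} {u v : V} (p : G.Walk u v) : ℝ≥0∞ :=
  (p.darts.map fun d => w d.toProd.1 d.toProd.2).sum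

/-- The shortest-path distance: infimum of lengths of all walks (⊤ if none exists). -/
noncomputable def gdist (G : SimpleGraph V) (w : V → V → ℝ≥0∞) (u v : V) : ℝ≥0∞ :=
  ⨅ p : G.Walk u v, wlen w p

/-- The component `C_i`: the subgraph of `G` induced on `P ⁻¹ {i}`
(as a graph on `V`: edges of `G` with both endpoints mapped to `i` by `P`). -/
def comp (G : SimpleGraph V) (P : V → ι) (i : ι) : SimpleGraph V where
  Adj u v := G.Adj u v ∧ P u = i ∧ P v = i
  symm := ⟨fun _ _ h => ⟨h.1.symm, h.2.2, h.2.1⟩⟩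
  loopless := ⟨fun u h => G.irrefl h.1⟩

/-- The boundary `B(C_i)`: vertices of component `i` having a `G`-neighbor
in a different component. -/
def bdry (G : SimpleGraph V) (P : V → ι) (i : ι) : Set V :=
  {v | P v = i ∧ ∃ u, G.Adj v u ∧ P u ≠ i}

/-- The set `B` of all boundary vertices. -/
def bdryAll (G : SimpleGraph V) (P : V → ι) : Set V :=
  ⋃ i, bdry G P i

/-- The boundary graph `BG`: distinct boundary vertices `b1, b2` are adjacent
iff `P b1 = P b2` or `G.Adj b1 b2`. -/
def BGraph (G : SimpleGraph V) (P : V → ι) : SimpleGraph V where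
  Adj b1 b2 := b1 ≠ b2 ∧ b1 ∈ bdryAll G P ∧ b2 ∈ bdryAll G P ∧ (P b1 = P b2 ∨ G.Adj b1 b2)
  symm := by
    constructor
    intro u v h
    refine ⟨h.1.symm, h.2.2.1, h.2.1, ?_⟩
    rcases h.2.2.2 with h' | h'
    · exact Or.inl h'.symm
    · exact Or.inr h'.symm
  loopless := ⟨fun u h => h.1 rfl⟩

open Classical in
/-- The edge weight of the boundary graph:
`wt b1 b2 = dist_{C_{P b1}}(b1, b2)` if `P b1 = P b2`, and `w b1 b2` otherwise. -/
noncomputable def wt (G : SimpleGraph V) (P : V → ι) (w : V → V → ℝ≥0∞) (b1 b2 : V) : ℝ≥0∞ :=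
  if P b1 = P b2 then gdist (comp G P (P b1)) w b1 b2 else w b1 b2

/-
Proof idea: every edge of the boundary graph weighs at least the `G`-distance of its ends, so
the right-hand side bounds `dist_G(v1, v2)` from above by the triangle inequality. Conversely,
along any walk from `v1` to `v2` the first change of component happens at a boundary vertex `b1`
of `C_i`; after it, each edge between components and each stretch inside one component between
two boundary vertices is an edge of the boundary graph of no larger weight, and the last stretch
runs inside `C_j` from a boundary vertex `b2` to `v2`.
-/

section WalkLength

variable {G : SimpleGraph V} {w : V → V → ℝ≥0∞} {u v x : V}

@[simp] lemma wlen_nil : wlen w (SimpleGraph.Walk.nil : G.Walk u u) = 0 := rfl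

@[simp] lemma wlen_cons (h : G.Adj u v) (p : G.Walk v x) :
    wlen w (.cons h p) = w u v + wlen w p := by
  simp [wlen]

lemma wlen_append (p : G.Walk u v) (q : G.Walk v x) :
    wlen w (p.append q) = wlen w p + wlen w q := by
  simp [wlen, SimpleGraph.Walk.darts_append]

lemma gdist_le_wlen (p : G.Walk u v) : gdist G w u v ≤ wlen w p := iInf_le _ p

@[simp] lemma gdist_self : gdist G w u u = 0 :=
  nonpos_iff_eq_zero.1 (gdist_le_wlen .nil)

lemma gdist_le_of_adj (h : G.Adj u v) : gdist G w u v ≤ w u v := by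
  simpa using gdist_le_wlen (w := w) (.cons h .nil)

lemma gdist_triangle : gdist G w u x ≤ gdist G w u v + gdist G w v x :=
  ENNReal.le_iInf_add_iInf fun p q => (gdist_le_wlen (p.append q)).trans_eq (wlen_append p q)

lemma gdist_le_adj_add (h : G.Adj u v) : gdist G w u x ≤ w u v + gdist G w v x :=
  gdist_triangle.trans (add_le_add (gdist_le_of_adj h) le_rfl)

lemma gdist_le_add_adj (h : G.Adj v x) : gdist G w u x ≤ gdist G w u v + w v x :=
  gdist_triangle.trans (add_le_add le_rfl (gdist_le_of_adj h))

lemma gdist_le_gdist_of_adj {H : SimpleGraph V} {w' : V → V → ℝ≥0∞}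
    (h : ∀ a b, H.Adj a b → gdist G w a b ≤ w' a b) : gdist G w u v ≤ gdist H w' u v := by
  refine le_iInf fun p => ?_
  induction p with
  | nil => simp
  | cons hab p ih =>
    exact gdist_triangle.trans ((add_le_add (h _ _ hab) ih).trans_eq (wlen_cons _ _).symm)

end WalkLength

section Partition

variable {G : SimpleGraph V} {w : V → V → ℝ≥0∞} {P : V → ι} {u v b : V}

lemma gdist_le_gdist_comp (k : ι) : gdist G w u v ≤ gdist (comp G P k) w u v :=
  gdist_le_gdist_of_adj fun _ _ h => gdist_le_of_adj h.1

lemma mem_bdry_of_adj (h : G.Adj u v) (hP : P u ≠ P v) : u ∈ bdry G P (P u) :=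
  ⟨rfl, v, h, hP.symm⟩

lemma mem_bdryAll_of_adj (h : G.Adj u v) (hP : P u ≠ P v) : u ∈ bdryAll G P :=
  Set.mem_iUnion.2 ⟨_, mem_bdry_of_adj h hP⟩

lemma mem_bdry_of_mem_bdryAll (hb : b ∈ bdryAll G P) : b ∈ bdry G P (P b) := by
  obtain ⟨k, rfl, hk⟩ := Set.mem_iUnion.1 hb
  exact ⟨rfl, hk⟩

lemma gdist_le_gdist_BGraph : gdist G w u v ≤ gdist (BGraph G P) (wt G P w) u v :=
  gdist_le_gdist_of_adj fun _ _ h => by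
    unfold wt
    split_ifs with hP
    · exact gdist_le_gdist_comp _
    · exact gdist_le_of_adj (h.2.2.2.resolve_left hP)

lemma gdist_BGraph_le_of_adj (h : G.Adj u v) (hP : P u ≠ P v) :
    gdist (BGraph G P) (wt G P w) u v ≤ w u v := by
  have hadj : (BGraph G P).Adj u v :=
    ⟨h.ne, mem_bdryAll_of_adj h hP, mem_bdryAll_of_adj h.symm hP.symm, .inr h⟩
  simpa only [wt, if_neg hP] using gdist_le_of_adj (w := wt G P w) hadj

lemma gdist_BGraph_le_gdist_comp (hu : u ∈ bdryAll G P) (hv : v ∈ bdryAll G P)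
    (hP : P u = P v) : gdist (BGraph G P) (wt G P w) u v ≤ gdist (comp G P (P u)) w u v := by
  rcases eq_or_ne u v with rfl | hne
  · simp
  · simpa only [wt, if_pos hP] using
      gdist_le_of_adj (w := wt G P w) (show (BGraph G P).Adj u v from ⟨hne, hu, hv, .inl hP⟩)

/-- `b` is the boundary vertex through which the walk entered the component of its start `u`. -/
lemma exists_mem_bdry_gdist_BGraph_add_le (r : G.Walk u v) (hb : b ∈ bdryAll G P)
    (hbu : P b = P u) :
    ∃ b' ∈ bdry G P (P v),
      gdist (BGraph G P) (wt G P w) b b' + gdist (comp G P (P v)) w b' v ≤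
      gdist (comp G P (P u)) w b u + wlen w r := by
  induction r generalizing b with
  | nil => exact ⟨b, hbu ▸ mem_bdry_of_mem_bdryAll hb, by simp⟩
  | @cons u d v h p ih =>
    rw [wlen_cons, ← add_assoc]
    by_cases hP : P d = P u
    · obtain ⟨b', hb', hle⟩ := ih hb (hbu.trans hP.symm)
      refine ⟨b', hb', hle.trans (add_le_add ?_ le_rfl)⟩
      rw [hP]
      exact gdist_le_add_adj (G := comp G P (P u)) ⟨h, rfl, hP⟩
    · obtain ⟨b', hb', hle⟩ := ih (mem_bdryAll_of_adj h.symm hP) rfl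
      rw [gdist_self, zero_add] at hle
      have hu : u ∈ bdryAll G P := mem_bdryAll_of_adj h (Ne.symm hP)
      refine ⟨b', hb', ?_⟩
      calc gdist (BGraph G P) (wt G P w) b b' + gdist (comp G P (P v)) w b' v
          ≤ gdist (BGraph G P) (wt G P w) b u + gdist (BGraph G P) (wt G P w) u d +
              gdist (BGraph G P) (wt G P w) d b' + gdist (comp G P (P v)) w b' v := by
            gcongr
            exact (gdist_triangle (v := u)).trans
              ((add_le_add le_rfl (gdist_triangle (v := d))).trans_eq (add_assoc _ _ _).symm)
        _ ≤ gdist (comp G P (P u)) w b u + w u d + wlen w p := by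
            rw [add_assoc _ (gdist _ _ d b')]
            gcongr
            · exact hbu ▸ gdist_BGraph_le_gdist_comp hb hu hbu
            · exact gdist_BGraph_le_of_adj h (Ne.symm hP)

lemma exists_mem_bdry_gdist_add_le_wlen (r : G.Walk u v) (huv : P u ≠ P v) :
    ∃ b₁ ∈ bdry G P (P u), ∃ b₂ ∈ bdry G P (P v),
      gdist (comp G P (P u)) w u b₁ + gdist (BGraph G P) (wt G P w) b₁ b₂ +
        gdist (comp G P (P v)) w b₂ v ≤ wlen w r := by
  induction r with
  | nil => exact absurd rfl huv
  | @cons u d v h p ih =>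
    rw [wlen_cons]
    by_cases hP : P d = P u
    · obtain ⟨b₁, hb₁, b₂, hb₂, hle⟩ := ih (hP ▸ huv)
      rw [hP] at hb₁ hle
      refine ⟨b₁, hb₁, b₂, hb₂, ?_⟩
      calc _ ≤ w u d + gdist (comp G P (P u)) w d b₁ + gdist (BGraph G P) (wt G P w) b₁ b₂ +
              gdist (comp G P (P v)) w b₂ v := by
            gcongr
            exact gdist_le_adj_add (G := comp G P (P u)) ⟨h, rfl, hP⟩
        _ ≤ w u d + wlen w p := by
            rw [add_assoc _ (gdist _ _ d b₁), add_assoc]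
            gcongr
    · obtain ⟨b₂, hb₂, hle⟩ :=
        exists_mem_bdry_gdist_BGraph_add_le (w := w) p (mem_bdryAll_of_adj h.symm hP) rfl
      rw [gdist_self, zero_add] at hle
      refine ⟨u, mem_bdry_of_adj h (Ne.symm hP), b₂, hb₂, ?_⟩
      rw [gdist_self, zero_add]
      calc _ ≤ w u d + gdist (BGraph G P) (wt G P w) d b₂ +
              gdist (comp G P (P v)) w b₂ v := by
            gcongr
            exact gdist_triangle.trans (add_le_add (gdist_BGraph_le_of_adj h (Ne.symm hP)) le_rfl)
        _ ≤ w u d + wlen w p := by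
            rw [add_assoc]
            gcongr

end Partition

theorem stmt9_general {V : Type*} {ι : Type*}
    (G : SimpleGraph V) (w : V → V → ℝ≥0∞)
    (P : V → ι) (i j : ι) (v1 v2 : V) (h1 : P v1 = i) (h2 : P v2 = j) (hij : i ≠ j) :
    gdist G w v1 v2 =
      ⨅ b1 ∈ bdry G P i, ⨅ b2 ∈ bdry G P j,
        (gdist (comp G P i) w v1 b1 + gdist (BGraph G P) (wt G P w) b1 b2 +
          gdist (comp G P j) w b2 v2) := by
  subst h1 h2
  refine le_antisymm (le_iInf₂ fun b₁ _ => le_iInf₂ fun b₂ _ => ?_) (le_iInf fun p => ?_)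
  · calc gdist G w v1 v2 ≤ gdist G w v1 b₁ + gdist G w b₁ b₂ + gdist G w b₂ v2 :=
          gdist_triangle.trans ((add_le_add le_rfl gdist_triangle).trans_eq (add_assoc _ _ _).symm)
      _ ≤ _ := by
          gcongr
          · exact gdist_le_gdist_comp _
          · exact gdist_le_gdist_BGraph
          · exact gdist_le_gdist_comp _
  · obtain ⟨b₁, hb₁, b₂, hb₂, hle⟩ := exists_mem_bdry_gdist_add_le_wlen p hij
    exact (iInf₂_le_of_le b₁ hb₁ (iInf₂_le_of_le b₂ hb₂ le_rfl)).trans hle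

/-- Correctness of the query algorithm, distinct components: Let `v1, v2`
be vertices with `P v1 = i`, `P v2 = j`, and `i ≠ j`. Then `dist_G(v1,v2)` equals the
infimum over `b1 ∈ B(C_i)` and `b2 ∈ B(C_j)` of
`dist_{C_i}(v1,b1) + dist_BG(b1,b2) + dist_{C_j}(b2,v2)`. -/
theorem stmt9 {V : Type*} {ι : Type*} [Fintype V] [Fintype ι]
    (G : SimpleGraph V) (w : V → V → ℝ≥0∞)
    (hsymm : ∀ u v, w u v = w v u) (hfin : ∀ u v, G.Adj u v → w u v < ⊤)
    (P : V → ι) (i j : ι) (v1 v2 : V) (h1 : P v1 = i) (h2 : P v2 = j) (hij : i ≠ j) :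
    gdist G w v1 v2 =
      ⨅ b1 ∈ bdry G P i, ⨅ b2 ∈ bdry G P j,
        (gdist (comp G P i) w v1 b1 + gdist (BGraph G P) (wt G P w) b1 b2 +
          gdist (comp G P j) w b2 v2) :=
  stmt9_general G w P i j v1 v2 h1 h2 hij

end SPQ
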